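/- arXiv:1903.04273 — 2 statements merged into one kernel-verified Lean document; each statement's English description precedes it below -/
import Mathlib

section
/- There is a problem which admits non-relativized avoidance of 1 cone but does not admit non-relativized avoidance of 2 cones. -/
/-!
If `A` and `B` form a minimal pair of noncomputable sets, the problem whose solutions are exactly
`A` and `B` avoids any single noncomputable cone (it cannot lie below both), but not the two cones
above `A` and `B` themselves.

A minimal pair exists by the Baire category theorem in Cantor space. For noncomputable `C` and a
fixed oracle code, the oracles computing `C` through that code form a nowhere dense set: were it
dense in a cylinder `[σ]`, then every finite extension of `σ` would give correct answers only, and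
some extension gives each answer, so searching over extensions would compute `C`. Countably many
codes and countably many `C ≤_T A` leave a comeagre set of noncomputable `B` forming a minimal pair
with `A`.
-/

open Classical in
/-- The characteristic function of a set of naturals. -/
noncomputable def chi (A : Set ℕ) : ℕ → ℕ := fun n => if n ∈ A then 1 else 0

/-- The effective join (Turing join) of two sets of naturals:
`X ⊕ Y = {2n : n ∈ X} ∪ {2n+1 : n ∈ Y}`. -/
def setJoin (A B : Set ℕ) : Set ℕ :=
  {n | (∃ m ∈ A, n = 2 * m) ∨ (∃ m ∈ B, n = 2 * m + 1)}

/-- The graph of a function `f : ℕ → ℕ`, coded as a set of naturals. -/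
def funGraph (f : ℕ → ℕ) : Set ℕ := {m | ∃ n, m = Nat.pair n (f n)}

/-- Partial recursiveness relative to an oracle `g : ℕ → ℕ` (oracle computability). -/
inductive RecursiveInOracle (g : ℕ → ℕ) : (ℕ →. ℕ) → Prop
  | zero : RecursiveInOracle g (pure 0)
  | succ : RecursiveInOracle g Nat.succ
  | left : RecursiveInOracle g fun n => (Nat.unpair n).1
  | right : RecursiveInOracle g fun n => (Nat.unpair n).2
  | oracle : RecursiveInOracle g g
  | pair {f h : ℕ →. ℕ} : RecursiveInOracle g f → RecursiveInOracle g h →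
      RecursiveInOracle g fun n => Nat.pair <$> f n <*> h n
  | comp {f h : ℕ →. ℕ} : RecursiveInOracle g f → RecursiveInOracle g h →
      RecursiveInOracle g fun n => h n >>= f
  | prec {f h : ℕ →. ℕ} : RecursiveInOracle g f → RecursiveInOracle g h →
      RecursiveInOracle g (Nat.unpaired fun a n =>
        n.rec (f a) fun y IH => do {let i ← IH; h (Nat.pair a (Nat.pair y i))})
  | rfind {f : ℕ →. ℕ} : RecursiveInOracle g f →
      RecursiveInOracle g fun a => Nat.rfind fun n => (fun m => m = 0) <$> f (Nat.pair a n)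

/-- Turing reducibility between sets of naturals. -/
noncomputable def TuringRed (A B : Set ℕ) : Prop := RecursiveInOracle (chi B) (chi A)

/-- `A` is `Σ⁰₁(Z)` (i.e. `Z`-c.e.): `A` is the domain of a partial `Z`-computable function. -/
noncomputable def SigmaOneIn (Z A : Set ℕ) : Prop :=
  ∃ f : ℕ →. ℕ, RecursiveInOracle (chi Z) f ∧ A = f.Dom

/-- `g` dominates `f` if `g n ≥ f n` for every `n`. -/
def Dominates (g f : ℕ → ℕ) : Prop := ∀ n, f n ≤ g n

/-- `f` is `Z`-hyperimmune: no `Z`-computable function dominates `f`. -/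
noncomputable def HyperimmuneIn (Z : Set ℕ) (f : ℕ → ℕ) : Prop :=
  ∀ g : ℕ → ℕ, RecursiveInOracle (chi Z) g → ¬ Dominates g f

/-- `A` is `Δ⁰₂(G)`: `A` is limit computable relative to `G`. -/
noncomputable def DeltaTwoIn (G A : Set ℕ) : Prop :=
  ∃ h : ℕ → ℕ, RecursiveInOracle (chi G) h ∧ ∀ x, ∃ s₀, ∀ s ≥ s₀, h (Nat.pair x s) = chi A x

/-- `A` is c.e. (`Σ⁰₁`). -/
noncomputable def CESet (A : Set ℕ) : Prop := SigmaOneIn ∅ A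

/-- `A` is `Δ⁰₂` (limit computable). -/
noncomputable def DeltaTwo (A : Set ℕ) : Prop := DeltaTwoIn ∅ A

/-- `A` is `Z`-immune: `A` is infinite and contains no infinite `Z`-computable subset. -/
noncomputable def ImmuneIn (Z A : Set ℕ) : Prop :=
  A.Infinite ∧ ∀ B : Set ℕ, TuringRed B Z → B.Infinite → ¬ B ⊆ A

/-- `A` is `Z`-hyperimmune as a set: its principal function is `Z`-hyperimmune. -/
noncomputable def HyperimmuneSetIn (Z A : Set ℕ) : Prop :=
  A.Infinite ∧ HyperimmuneIn Z (Nat.nth (· ∈ A))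

/-- Enumeration reducibility, with finite sets coded by binary representation
(`m ∈ D_u ↔ Nat.testBit u m`). -/
noncomputable def EnumRed (B A : Set ℕ) : Prop :=
  ∃ W : Set ℕ, CESet W ∧
    ∀ n, n ∈ B ↔ ∃ u, Nat.pair n u ∈ W ∧ ∀ m, Nat.testBit u m = true → m ∈ A

/-- `B` is cototal: `B ≤ₑ ℕ \ B`. -/
noncomputable def Cototal (B : Set ℕ) : Prop := EnumRed B Bᶜ

/-- `X` is semi-computable: there is a computable selector function. -/
noncomputable def SemiComputable (X : Set ℕ) : Prop :=
  ∃ g : ℕ → ℕ, RecursiveInOracle (chi ∅) g ∧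
    ∀ x y : ℕ, (g (Nat.pair x y) = x ∨ g (Nat.pair x y) = y) ∧
      ((x ∈ X ∨ y ∈ X) → g (Nat.pair x y) ∈ X)

/-- A problem: a set of instances, and a solution relation between instances and solutions.
Instances and solutions are coded by sets of naturals. -/
structure Problem where
  Inst : Set (Set ℕ)
  Sol : Set ℕ → Set ℕ → Prop

/-- `P` admits preservation of `W`. -/
noncomputable def Preserves (P : Problem) (W : Set (Set ℕ)) : Prop :=
  ∀ Z ∈ W, ∀ X ∈ P.Inst, TuringRed X Z → ∃ Y, P.Sol X Y ∧ setJoin Z Y ∈ W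

/-- `P` admits strong preservation of `W`. -/
noncomputable def StronglyPreserves (P : Problem) (W : Set (Set ℕ)) : Prop :=
  ∀ Z ∈ W, ∀ X ∈ P.Inst, ∃ Y, P.Sol X Y ∧ setJoin Z Y ∈ W

/-- `W` is downward closed under Turing reducibility. -/
noncomputable def DownwardClosed (W : Set (Set ℕ)) : Prop :=
  ∀ X ∈ W, ∀ Y : Set ℕ, TuringRed Y X → Y ∈ W

/-- A Turing ideal: closed under effective join and downward closed under `≤_T`. -/
noncomputable def TuringIdeal (S : Set (Set ℕ)) : Prop :=
  (∀ X ∈ S, ∀ Y ∈ S, setJoin X Y ∈ S) ∧ DownwardClosed S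

/-- `P` holds in `S`: every instance of `P` in `S` has a solution in `S`. -/
def HoldsIn (P : Problem) (S : Set (Set ℕ)) : Prop :=
  ∀ X ∈ P.Inst, X ∈ S → ∃ Y, P.Sol X Y ∧ Y ∈ S

/-- `P` admits avoidance of `k` cones (`k ≤ ω`, with `ω` represented by `⊤ : ℕ∞`). -/
noncomputable def AvoidsCones (P : Problem) (k : ℕ∞) : Prop :=
  ∀ Z : Set ℕ, ∀ B : ℕ → Set ℕ, (∀ s : ℕ, (s : ℕ∞) < k → ¬ TuringRed (B s) Z) →
    ∀ X ∈ P.Inst, TuringRed X Z →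
      ∃ Y, P.Sol X Y ∧ ∀ s : ℕ, (s : ℕ∞) < k → ¬ TuringRed (B s) (setJoin Z Y)

/-- `P` admits non-relativized avoidance of `k` cones. -/
noncomputable def NRAvoidsCones (P : Problem) (k : ℕ∞) : Prop :=
  ∀ B : ℕ → Set ℕ, (∀ s : ℕ, (s : ℕ∞) < k → ¬ TuringRed (B s) ∅) →
    ∀ X ∈ P.Inst, TuringRed X ∅ →
      ∃ Y, P.Sol X Y ∧ ∀ s : ℕ, (s : ℕ∞) < k → ¬ TuringRed (B s) Y

/-- `P` admits preservation of `k` non-`Σ⁰₁` definitions. -/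
noncomputable def PreservesNonSigmaOne (P : Problem) (k : ℕ∞) : Prop :=
  ∀ Z : Set ℕ, ∀ B : ℕ → Set ℕ, (∀ s : ℕ, (s : ℕ∞) < k → ¬ SigmaOneIn Z (B s)) →
    ∀ X ∈ P.Inst, TuringRed X Z →
      ∃ Y, P.Sol X Y ∧ ∀ s : ℕ, (s : ℕ∞) < k → ¬ SigmaOneIn (setJoin Z Y) (B s)

/-- `P` admits preservation of `k` hyperimmunities. -/
noncomputable def PreservesHyperimmunities (P : Problem) (k : ℕ∞) : Prop :=
  ∀ Z : Set ℕ, ∀ f : ℕ → (ℕ → ℕ), (∀ s : ℕ, (s : ℕ∞) < k → HyperimmuneIn Z (f s)) →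
    ∀ X ∈ P.Inst, TuringRed X Z →
      ∃ Y, P.Sol X Y ∧ ∀ s : ℕ, (s : ℕ∞) < k → HyperimmuneIn (setJoin Z Y) (f s)

/-- `P` admits preservation of `k` immunities. -/
noncomputable def PreservesImmunities (P : Problem) (k : ℕ∞) : Prop :=
  ∀ Z : Set ℕ, ∀ B : ℕ → Set ℕ, (∀ s : ℕ, (s : ℕ∞) < k → ImmuneIn Z (B s)) →
    ∀ X ∈ P.Inst, TuringRed X Z →
      ∃ Y, P.Sol X Y ∧ ∀ s : ℕ, (s : ℕ∞) < k → ImmuneIn (setJoin Z Y) (B s)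

/-- Coding a point of Cantor space as a function `ℕ → ℕ`. -/
def boolFun (X : ℕ → Bool) : ℕ → ℕ := fun n => cond (X n) 1 0

/-- `F` is a trace of the closed set `C ⊆ 2^ω`: each `F n` is a set of binary strings of
length `n`, one of which is a prefix of a member of `C`. -/
def IsTrace (C : Set (ℕ → Bool)) (F : ℕ → Finset (List Bool)) : Prop :=
  ∀ n, (∀ σ ∈ F n, σ.length = n) ∧ ∃ σ ∈ F n, ∃ X ∈ C, σ = (List.range n).map X

/-- `C ⊆ 2^ω` has a `Z`-computable constant-bound trace. -/
noncomputable def HasCBTraceIn (Z : Set ℕ) (C : Set (ℕ → Bool)) : Prop :=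
  ∃ (F : ℕ → Finset (List Bool)) (k : ℕ), IsTrace C F ∧ (∀ n, (F n).card = k) ∧
    RecursiveInOracle (chi Z) (fun n => Encodable.encode (F n) : ℕ → ℕ)

open Classical in
/-- The real `0.B` with binary expansion given by `B`. -/
noncomputable def realOf (B : Set ℕ) : ℝ :=
  ∑' n : ℕ, if n ∈ B then ((2 : ℝ) ^ (n + 1))⁻¹ else 0

/-- A c.e. set of rationals: the image of a c.e. set of naturals under the
canonical enumeration of `ℚ`. -/
noncomputable def CERatSet (W : Set ℚ) : Prop :=
  ∃ S : Set ℕ, CESet S ∧ W = (fun n => Denumerable.ofNat ℚ n) '' S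

open PiNat Topology

theorem PFun.eq_coe_iff {α β : Type*} {p : α →. β} {f : α → β} :
    p = f ↔ ∀ a, f a ∈ p a := by
  constructor
  · rintro rfl a
    exact Part.mem_some _
  · intro h
    funext a
    exact Part.eq_some_iff.2 (h a)

theorem List.getD_map_range_append {α : Type*} (f : ℕ → α) (l : List α) (d : α) (k m : ℕ) :
    ((List.range k).map f ++ l).getD m d = if m < k then f m else l.getD (m - k) d := by
  split_ifs with hm
  · rw [List.getD_append _ _ _ _ (by simpa using hm), List.getD_eq_getElem _ _ (by simpa using hm)]
    simp
  · rw [List.getD_append_right _ _ _ _ (by simpa using hm), List.length_map, List.length_range]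

theorem exists_forall_le_of_monotone {P : ℕ → ℕ → Prop} (hP : ∀ m, Monotone (P m)) {x : ℕ}
    (h : ∀ m ≤ x, ∃ u, P m u) : ∃ u, ∀ m ≤ x, P m u := by
  choose! u hu using h
  exact ⟨(Finset.range (x + 1)).sup u, fun m hm =>
    hP m (Finset.le_sup (Finset.mem_range.2 (Nat.lt_succ_of_le hm))) (hu m hm)⟩

theorem exists_notMem_of_isMeagre {X : Type*} [TopologicalSpace X] [BaireSpace X] [Nonempty X]
    {s : Set X} (hs : IsMeagre s) : ∃ x, x ∉ s := by
  by_contra! h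
  exact not_isMeagre_of_isOpen isOpen_univ Set.univ_nonempty (hs.mono fun x _ => h x)

inductive OracleCode
  | zero | succ | left | right | oracle
  | pair (a b : OracleCode) | comp (a b : OracleCode) | prec (a b : OracleCode)
  | rfind (a : OracleCode)
  deriving Countable

namespace OracleCode

def eval (g : ℕ →. ℕ) : OracleCode → ℕ →. ℕ
  | zero => pure 0
  | succ => Nat.succ
  | left => fun n => (Nat.unpair n).1
  | right => fun n => (Nat.unpair n).2
  | oracle => g
  | pair a b => fun n => Nat.pair <$> eval g a n <*> eval g b n
  | comp a b => fun n => eval g b n >>= eval g a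
  | prec a b => Nat.unpaired fun x n =>
      n.rec (eval g a x) fun y IH => do {let i ← IH; eval g b (Nat.pair x (Nat.pair y i))}
  | rfind a => fun n => Nat.rfind fun m => (fun x => x = 0) <$> eval g a (Nat.pair n m)

theorem recursiveInOracle_iff {g : ℕ → ℕ} {f : ℕ →. ℕ} :
    RecursiveInOracle g f ↔ ∃ c, eval g c = f := by
  constructor
  · intro h
    induction h with
    | zero => exact ⟨zero, rfl⟩
    | succ => exact ⟨succ, rfl⟩
    | left => exact ⟨left, rfl⟩
    | right => exact ⟨right, rfl⟩
    | oracle => exact ⟨oracle, rfl⟩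
    | pair _ _ iha ihb =>
      obtain ⟨a, rfl⟩ := iha; obtain ⟨b, rfl⟩ := ihb; exact ⟨pair a b, rfl⟩
    | comp _ _ iha ihb =>
      obtain ⟨a, rfl⟩ := iha; obtain ⟨b, rfl⟩ := ihb; exact ⟨comp a b, rfl⟩
    | prec _ _ iha ihb =>
      obtain ⟨a, rfl⟩ := iha; obtain ⟨b, rfl⟩ := ihb; exact ⟨prec a b, rfl⟩
    | rfind _ ih =>
      obtain ⟨a, rfl⟩ := ih; exact ⟨rfind a, rfl⟩
  · rintro ⟨c, rfl⟩
    induction c with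
    | zero => exact .zero
    | succ => exact .succ
    | left => exact .left
    | right => exact .right
    | oracle => exact .oracle
    | pair _ _ iha ihb => exact .pair iha ihb
    | comp _ _ iha ihb => exact .comp iha ihb
    | prec _ _ iha ihb => exact .prec iha ihb
    | rfind _ ih => exact .rfind ih

section Eval

variable {g : ℕ →. ℕ} {a b : OracleCode}

theorem mem_eval_pair {n x : ℕ} :
    x ∈ eval g (pair a b) n ↔ ∃ p ∈ eval g a n, ∃ q ∈ eval g b n, Nat.pair p q = x := by
  simp only [eval, Seq.seq, Part.map_eq_map, Part.mem_bind_iff, Part.mem_map_iff]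
  constructor
  · rintro ⟨_, ⟨p, hp, rfl⟩, q, hq, rfl⟩; exact ⟨p, hp, q, hq, rfl⟩
  · rintro ⟨p, hp, q, hq, rfl⟩; exact ⟨_, ⟨p, hp, rfl⟩, q, hq, rfl⟩

theorem mem_eval_comp {n x : ℕ} :
    x ∈ eval g (comp a b) n ↔ ∃ v ∈ eval g b n, x ∈ eval g a v :=
  Part.mem_bind_iff

theorem eval_prec_zero (x : ℕ) : eval g (prec a b) (Nat.pair x 0) = eval g a x := by
  simp [eval, Nat.unpaired]

theorem eval_prec_succ (x k : ℕ) :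
    eval g (prec a b) (Nat.pair x (k + 1)) =
      (eval g (prec a b) (Nat.pair x k)).bind fun i => eval g b (Nat.pair x (Nat.pair k i)) := by
  simp [eval, Nat.unpaired]

theorem mem_eval_rfind {n x : ℕ} :
    x ∈ eval g (rfind a) n ↔
      0 ∈ eval g a (Nat.pair n x) ∧ ∀ m < x, ∃ v ∈ eval g a (Nat.pair n m), v ≠ 0 := by
  refine Nat.mem_rfind.trans ?_
  constructor
  · rintro ⟨h0, hlt⟩
    obtain ⟨v, hv, he⟩ := (Part.mem_map_iff _).1 h0
    refine ⟨of_decide_eq_true he ▸ hv, fun m hm => ?_⟩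
    obtain ⟨w, hw, he'⟩ := (Part.mem_map_iff _).1 (hlt hm)
    exact ⟨w, hw, by simpa using he'⟩
  · rintro ⟨h0, hlt⟩
    refine ⟨(Part.mem_map_iff _).2 ⟨0, h0, rfl⟩, fun {m} hm => ?_⟩
    obtain ⟨w, hw, he'⟩ := hlt m hm
    exact (Part.mem_map_iff _).2 ⟨w, hw, by simpa using he'⟩

end Eval

def IsUse (g : ℕ → ℕ) (c : OracleCode) (n a u : ℕ) : Prop :=
  ∀ g' : ℕ → ℕ, (∀ m < u, g' m = g m) → a ∈ eval g' c n

theorem IsUse.mono {g : ℕ → ℕ} {c : OracleCode} {n a u v : ℕ} (h : IsUse g c n a u)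
    (huv : u ≤ v) : IsUse g c n a v :=
  fun g' hg' => h g' fun m hm => hg' m (hm.trans_le huv)

theorem exists_isUse {g : ℕ → ℕ} :
    ∀ (c : OracleCode) {n a : ℕ}, a ∈ eval g c n → ∃ u, IsUse g c n a u
  | zero, _, _, h | succ, _, _, h | left, _, _, h | right, _, _, h => ⟨0, fun _ _ => h⟩
  | oracle, n, _, h => ⟨n + 1, fun g' hg' => by
      change _ ∈ ((g : ℕ →. ℕ) n) at h
      rw [PFun.coe_val, Part.mem_some_iff] at h
      change _ ∈ ((g' : ℕ →. ℕ) n)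
      simp [h, hg' n n.lt_succ_self]⟩
  | pair a b, n, _, h => by
    obtain ⟨p, hp, q, hq, rfl⟩ := mem_eval_pair.1 h
    obtain ⟨u, hu⟩ := exists_isUse a hp
    obtain ⟨v, hv⟩ := exists_isUse b hq
    exact ⟨max u v, fun g' hg' => mem_eval_pair.2
      ⟨p, (hu.mono (le_max_left u v)) g' hg', q, (hv.mono (le_max_right u v)) g' hg', rfl⟩⟩
  | comp a b, n, _, h => by
    obtain ⟨w, hw, hx⟩ := mem_eval_comp.1 h
    obtain ⟨u, hu⟩ := exists_isUse b hw
    obtain ⟨v, hv⟩ := exists_isUse a hx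
    exact ⟨max u v, fun g' hg' => mem_eval_comp.2
      ⟨w, (hu.mono (le_max_left u v)) g' hg', (hv.mono (le_max_right u v)) g' hg'⟩⟩
  | prec a b, n, y, h => by
    rw [← Nat.pair_unpair n] at h ⊢
    generalize n.unpair.1 = x, n.unpair.2 = k at h ⊢
    induction k generalizing y with
    | zero =>
      rw [eval_prec_zero] at h
      obtain ⟨u, hu⟩ := exists_isUse a h
      exact ⟨u, fun g' hg' => by rw [eval_prec_zero]; exact hu g' hg'⟩
    | succ k ih =>
      rw [eval_prec_succ] at h
      obtain ⟨i, hi, hy⟩ := Part.mem_bind_iff.1 h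
      obtain ⟨u, hu⟩ := ih i hi
      obtain ⟨v, hv⟩ := exists_isUse b hy
      exact ⟨max u v, fun g' hg' => by
        rw [eval_prec_succ]
        exact Part.mem_bind_iff.2
          ⟨i, (hu.mono (le_max_left u v)) g' hg', (hv.mono (le_max_right u v)) g' hg'⟩⟩
  | rfind a, n, x, h => by
    obtain ⟨hx, hlt⟩ := mem_eval_rfind.1 h
    have hvals : ∀ m ≤ x, ∃ v ∈ eval g a (Nat.pair n m), (v = 0 ↔ m = x) := by
      intro m hm
      rcases hm.lt_or_eq with hm | rfl
      · obtain ⟨v, hv, hv0⟩ := hlt m hm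
        exact ⟨v, hv, by simp [hv0, hm.ne]⟩
      · exact ⟨0, hx, by simp⟩
    choose! v hv hv0 using hvals
    obtain ⟨u, hu⟩ :=
      exists_forall_le_of_monotone (P := fun m u => IsUse g a (Nat.pair n m) (v m) u)
        (fun m _ _ huv h => h.mono huv) fun m hm => exists_isUse a (hv m hm)
    refine ⟨u, fun g' hg' => mem_eval_rfind.2 ⟨?_, fun m hm => ?_⟩⟩
    · simpa [(hv0 x le_rfl).2 rfl] using hu x le_rfl g' hg'
    · exact ⟨v m, hu m hm.le g' hg', fun h0 => hm.ne ((hv0 m hm.le).1 h0)⟩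

open Computable in
theorem partrec_eval {α : Type*} [Primcodable α] {G : α → ℕ → ℕ} (hG : Computable₂ G) :
    ∀ c : OracleCode, Partrec₂ fun x n => eval (G x) c n
  | zero => Partrec.const' (Part.some 0)
  | succ => (Computable.succ.comp snd).partrec
  | left => (fst.comp (unpair.comp snd)).partrec
  | right => (snd.comp (unpair.comp snd)).partrec
  | oracle => hG.partrec₂
  | pair a b => by
    refine ((partrec_eval hG a).bind (((partrec_eval hG b).comp (fst.comp fst)
      (snd.comp fst)).map (Primrec₂.natPair.comp (Primrec.snd.comp Primrec.fst)
        Primrec.snd).to_comp.to₂).to₂).to₂.of_eq fun p => ?_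
    simp [eval, Seq.seq]
  | comp a b => ((partrec_eval hG b).bind
      ((partrec_eval hG a).comp (fst.comp fst) snd).to₂).of_eq fun _ => rfl
  | prec a b => by
    have hstep : Partrec₂ fun (p : α × ℕ) (yi : ℕ × ℕ) =>
        eval (G p.1) b (Nat.pair p.2.unpair.1 (Nat.pair yi.1 yi.2)) :=
      (partrec_eval hG b).comp (fst.comp fst) (Primrec₂.natPair.comp
        (Primrec.fst.comp (Primrec.unpair.comp (Primrec.snd.comp Primrec.fst)))
        (Primrec₂.natPair.comp (Primrec.fst.comp Primrec.snd)
          (Primrec.snd.comp Primrec.snd))).to_comp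
    exact (Partrec.nat_rec (snd.comp (unpair.comp snd))
      ((partrec_eval hG a).comp fst (fst.comp (unpair.comp snd))) hstep).of_eq fun _ => rfl
  | rfind a => by
    refine (Partrec.rfind (p := fun (p : α × ℕ) (m : ℕ) =>
      (fun x => decide (x = 0)) <$> eval (G p.1) a (Nat.pair p.2 m)) ?_).of_eq fun _ => rfl
    exact ((partrec_eval hG a).comp (fst.comp fst)
      (Primrec₂.natPair.comp (Primrec.snd.comp Primrec.fst) Primrec.snd).to_comp).map
        ((Primrec.eq.comp Primrec.snd (Primrec.const 0)).decide.to_comp.to₂)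

end OracleCode

open Computable Nat.Partrec Code in
theorem computable_of_forall_mem_eq {α : Type*} [Primcodable α] {F : α → ℕ →. ℕ}
    (hF : Partrec₂ F) {h : ℕ → ℕ} (sound : ∀ x n a, a ∈ F x n → a = h n)
    (complete : ∀ n, ∃ x, h n ∈ F x n) : Computable h := by
  obtain ⟨e, he⟩ := exists_code.1 hF
  have eval_e (x : α) (n : ℕ) : eval e (Encodable.encode (x, n)) = F x n := by
    simp [he, Encodable.encodek, Part.map_id']
  -- a dovetailed search through all witnesses `x` and step bounds `s`
  let search (n k : ℕ) : Option ℕ :=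
    (Encodable.decode k.unpair.2 : Option α).bind fun x =>
      evaln k.unpair.1 e (Encodable.encode (x, n))
  have search_sound {n k a} (ha : a ∈ search n k) : a = h n := by
    obtain ⟨x, -, hx⟩ := Option.mem_bind_iff.1 ha
    exact sound x n a (eval_e x n ▸ evaln_sound hx)
  have search_dom (n : ℕ) : (Nat.rfindOpt (search n)).Dom := by
    obtain ⟨x, hx⟩ := complete n
    obtain ⟨s, hs⟩ := evaln_complete.1 ((eval_e x n).symm ▸ hx)
    exact Nat.rfindOpt_dom.2 ⟨Nat.pair s (Encodable.encode x), h n, by simpa [search] using hs⟩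
  have hdecode : Computable fun p : ℕ × ℕ => (Encodable.decode p.2.unpair.2 : Option α) :=
    Computable.decode.comp (snd.comp (unpair.comp snd))
  have hevaln : Computable₂ fun (p : ℕ × ℕ) (x : α) =>
      evaln p.2.unpair.1 e (Encodable.encode (x, p.1)) :=
    have hin : Computable fun q : (ℕ × ℕ) × α =>
        ((q.1.2.unpair.1, e), Encodable.encode (q.2, q.1.1)) :=
      ((fst.comp (unpair.comp (snd.comp fst))).pair (const e)).pair
        (Computable.encode.comp (snd.pair (fst.comp fst)))
    (primrec_evaln.to_comp.comp hin).of_eq fun _ => rfl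
  have hsearch : Computable₂ search := hdecode.option_bind hevaln
  refine (Partrec.rfindOpt hsearch).of_eq fun n => Part.eq_some_iff.2 ?_
  obtain ⟨k, hk⟩ := Nat.rfindOpt_spec (Part.get_mem (search_dom n))
  exact search_sound hk ▸ Part.get_mem _

theorem recursiveInOracle_of_partrec {f : ℕ →. ℕ} (hf : Nat.Partrec f) (g : ℕ → ℕ) :
    RecursiveInOracle g f := by
  induction hf with
  | zero => exact .zero
  | succ => exact .succ
  | left => exact .left
  | right => exact .right
  | pair _ _ iha ihb => exact .pair iha ihb
  | comp _ _ iha ihb => exact .comp iha ihb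
  | prec _ _ iha ihb => exact .prec iha ihb
  | rfind _ ih => exact .rfind ih

theorem turingRed_empty_of_computable {C : Set ℕ} (hC : Computable (chi C)) : TuringRed C ∅ :=
  recursiveInOracle_of_partrec (Partrec.nat_iff.1 hC) _

theorem countable_setOf_turingRed (Z : Set ℕ) : {A | TuringRed A Z}.Countable := by
  refine (Set.countable_range fun c => {n | 1 ∈ OracleCode.eval (chi Z) c n}).mono ?_
  intro A hA
  obtain ⟨c, hc⟩ := OracleCode.recursiveInOracle_iff.1 hA
  refine ⟨c, Set.ext fun n => ?_⟩
  simp only [Set.mem_ofPred_eq, hc, PFun.coe_val, Part.mem_some_iff, chi]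
  split_ifs with h <;> simp [h]

theorem chi_setOf_eq_boolFun (Y : ℕ → Bool) : chi {n | Y n} = boolFun Y := by
  funext n
  cases h : Y n <;> simp [chi, boolFun, h]

theorem exists_cylinder_subset {Y : ℕ → Bool} {s : Set (ℕ → Bool)} (hs : s ∈ 𝓝 Y) :
    ∃ k, cylinder Y k ⊆ s := by
  obtain ⟨_, ⟨x, k, rfl⟩, hY, hsub⟩ := (isTopologicalBasis_cylinders _).mem_nhds_iff.1 hs
  exact ⟨k, mem_cylinder_iff_eq.1 hY ▸ hsub⟩

theorem isNowhereDense_singleton (Y : ℕ → Bool) : IsNowhereDense {Y} := by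
  rw [IsNowhereDense, closure_singleton, Set.eq_empty_iff_forall_notMem]
  intro Y' hY'
  obtain rfl : Y' = Y := Set.mem_singleton_iff.1 (interior_subset hY')
  obtain ⟨k, hk⟩ := exists_cylinder_subset (isOpen_interior.mem_nhds hY')
  have := interior_subset (hk (update_mem_cylinder Y' k (!Y' k)))
  simpa using congr_fun this k

theorem isOpen_setOf_mem_eval (c : OracleCode) (n a : ℕ) :
    IsOpen {Y : ℕ → Bool | a ∈ OracleCode.eval (boolFun Y) c n} := by
  refine isOpen_iff_mem_nhds.2 fun Y hY => ?_
  obtain ⟨u, hu⟩ := OracleCode.exists_isUse c hY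
  refine Filter.mem_of_superset ((isOpen_cylinder _ Y u).mem_nhds (self_mem_cylinder Y u))
    fun Y' hY' => hu _ fun m hm => ?_
  simp [boolFun, mem_cylinder_iff.1 hY' m hm]

theorem turingRed_empty_of_cylinder_subset_closure (c : OracleCode) {C : Set ℕ} {Y₀ : ℕ → Bool}
    {k : ℕ} (hk : cylinder Y₀ k ⊆
      closure {Y : ℕ → Bool | ∀ n, chi C n ∈ OracleCode.eval (boolFun Y) c n}) :
    TuringRed C ∅ := by
  let ext (l : List Bool) (m : ℕ) : Bool := ((List.range k).map Y₀ ++ l).getD m false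
  have ext_mem (l : List Bool) : ext l ∈ cylinder Y₀ k :=
    mem_cylinder_iff.2 fun m hm => by simp only [ext, List.getD_map_range_append, if_pos hm]
  have hext : Computable₂ fun l m => boolFun (ext l) m :=
    (Primrec.cond ((Primrec.list_getD false).comp
      (Primrec.list_append.comp (Primrec.const _) Primrec.fst) Primrec.snd)
      (Primrec.const 1) (Primrec.const 0)).to_comp
  -- a wrong answer from a finite extension of `Y₀ ↾ k` would persist on an open set, which
  -- meets the set of correct oracles since it meets the cylinder
  have sound (l : List Bool) (n a : ℕ) (ha : a ∈ OracleCode.eval (boolFun (ext l)) c n) :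
      a = chi C n := by
    obtain ⟨Y, hYa, hYD⟩ :=
      mem_closure_iff.1 (hk (ext_mem l)) _ (isOpen_setOf_mem_eval c n a) ha
    exact Part.mem_unique hYa (hYD n)
  have complete (n : ℕ) : ∃ l, chi C n ∈ OracleCode.eval (boolFun (ext l)) c n := by
    obtain ⟨Y, hYk, hYD⟩ := mem_closure_iff.1 (hk (self_mem_cylinder Y₀ k)) _
      (isOpen_cylinder _ Y₀ k) (self_mem_cylinder Y₀ k)
    obtain ⟨u, hu⟩ := OracleCode.exists_isUse c (hYD n)
    let l := (List.range u).map fun j => Y (k + j)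
    refine ⟨l, hu (boolFun (ext l)) fun m hm => ?_⟩
    show (bif ext l m then 1 else 0) = bif Y m then 1 else 0
    simp only [ext, List.getD_map_range_append]
    split_ifs with hmk
    · rw [mem_cylinder_iff.1 hYk m hmk]
    · rw [List.getD_eq_getElem _ _ (by simp [l]; omega)]
      simp only [l, List.getElem_map, List.getElem_range]
      congr 2
      omega
  exact turingRed_empty_of_computable
    (computable_of_forall_mem_eq (OracleCode.partrec_eval hext c) sound complete)

theorem isNowhereDense_setOf_forall_mem_eval (c : OracleCode) {C : Set ℕ}
    (hC : ¬ TuringRed C ∅) :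
    IsNowhereDense {Y : ℕ → Bool | ∀ n, chi C n ∈ OracleCode.eval (boolFun Y) c n} := by
  rw [IsNowhereDense, Set.eq_empty_iff_forall_notMem]
  intro Y₀ hY₀
  obtain ⟨k, hk⟩ := exists_cylinder_subset (isOpen_interior.mem_nhds hY₀)
  exact hC (turingRed_empty_of_cylinder_subset_closure c (hk.trans interior_subset))

theorem isMeagre_setOf_turingRed {C : Set ℕ} (hC : ¬ TuringRed C ∅) :
    IsMeagre {Y : ℕ → Bool | TuringRed C {n | Y n}} := by
  have hcone : {Y : ℕ → Bool | TuringRed C {n | Y n}} =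
      ⋃ c, {Y | ∀ n, chi C n ∈ OracleCode.eval (boolFun Y) c n} := by
    ext Y
    simp [TuringRed, chi_setOf_eq_boolFun, OracleCode.recursiveInOracle_iff, PFun.eq_coe_iff]
  rw [hcone]
  exact isMeagre_iUnion fun c => (isNowhereDense_setOf_forall_mem_eval c hC).isMeagre

theorem isMeagre_setOf_computable : IsMeagre {Y : ℕ → Bool | TuringRed {n | Y n} ∅} := by
  have hcount : {Y : ℕ → Bool | TuringRed {n | Y n} ∅}.Countable :=
    (countable_setOf_turingRed ∅).preimage fun Y Y' h => funext fun n => by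
      simpa using congr_arg (n ∈ ·) h
  rw [← Set.biUnion_of_singleton {Y : ℕ → Bool | TuringRed {n | Y n} ∅}]
  exact isMeagre_biUnion hcount fun Y _ => (isNowhereDense_singleton Y).isMeagre

theorem exists_not_turingRed_empty : ∃ A : Set ℕ, ¬ TuringRed A ∅ := by
  obtain ⟨Y, hY⟩ := exists_notMem_of_isMeagre isMeagre_setOf_computable
  exact ⟨{n | Y n}, hY⟩

def IsMinimalPair (A B : Set ℕ) : Prop :=
  ¬ TuringRed A ∅ ∧ ¬ TuringRed B ∅ ∧ ∀ C, TuringRed C A → TuringRed C B → TuringRed C ∅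

theorem exists_isMinimalPair {A : Set ℕ} (hA : ¬ TuringRed A ∅) : ∃ B, IsMinimalPair A B := by
  let S := {C | TuringRed C A ∧ ¬ TuringRed C ∅}
  have hS : S.Countable := (countable_setOf_turingRed A).mono fun _ hC => hC.1
  obtain ⟨Y, hY⟩ := exists_notMem_of_isMeagre (isMeagre_setOf_computable.union
    (isMeagre_biUnion hS fun C hC => isMeagre_setOf_turingRed hC.2))
  simp only [Set.mem_union, Set.mem_iUnion, not_or, not_exists] at hY
  exact ⟨{n | Y n}, hA, hY.1, fun C hCA hCB => by_contra fun hC => hY.2 C ⟨hCA, hC⟩ hCB⟩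

def pairProblem (A B : Set ℕ) : Problem where
  Inst := Set.univ
  Sol _ Y := Y = A ∨ Y = B

theorem nrAvoidsCones_one_pairProblem {A B : Set ℕ} (h : IsMinimalPair A B) :
    NRAvoidsCones (pairProblem A B) 1 := by
  intro D hD X _ _
  have hD₀ : ¬ TuringRed (D 0) ∅ := hD 0 (by norm_num)
  obtain ⟨Y, hY, hDY⟩ : ∃ Y, (Y = A ∨ Y = B) ∧ ¬ TuringRed (D 0) Y := by
    by_cases hDA : TuringRed (D 0) A
    · exact ⟨B, Or.inr rfl, fun hDB => hD₀ (h.2.2 _ hDA hDB)⟩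
    · exact ⟨A, Or.inl rfl, hDA⟩
  refine ⟨Y, hY, fun s hs => ?_⟩
  obtain rfl : s = 0 := Nat.lt_one_iff.1 (by exact_mod_cast hs)
  exact hDY

theorem not_nrAvoidsCones_two_pairProblem {A B : Set ℕ} (hA : ¬ TuringRed A ∅)
    (hB : ¬ TuringRed B ∅) : ¬ NRAvoidsCones (pairProblem A B) 2 := by
  intro h
  obtain ⟨Y, hY, hAB⟩ := h (fun s => if s = 0 then A else B)
    (fun s _ => by split_ifs; exacts [hA, hB]) ∅ trivial RecursiveInOracle.oracle
  rcases hY with rfl | rfl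
  · exact hAB 0 (by norm_num) RecursiveInOracle.oracle
  · exact hAB 1 (by norm_num) RecursiveInOracle.oracle

/-- There is a problem admitting non-relativized avoidance of 1 cone
but not of 2 cones. -/
theorem stmt5 : ∃ P : Problem, NRAvoidsCones P 1 ∧ ¬ NRAvoidsCones P 2 := by
  obtain ⟨A, hA⟩ := exists_not_turingRed_empty
  obtain ⟨B, hAB⟩ := exists_isMinimalPair hA
  exact ⟨pairProblem A B, nrAvoidsCones_one_pairProblem hAB,
    not_nrAvoidsCones_two_pairProblem hAB.1 hAB.2.1⟩
end

section
/- Let A ⊆ ℕ be a semi-computable set. Then: (1) A and its complement ℕ∖A form a minimal pair in the enumeration degrees, i.e., every set C with C ≤_e A and C ≤_e ℕ∖A is c.e.; (2) if A is cototal (A ≤_e ℕ∖A), then A is c.e. -/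
/-!
If `C ≤ₑ A` via `W₀` and `C ≤ₑ Aᶜ` via `W₁`, then `n ∈ C` iff there are axioms `⟨n, D₀⟩ ∈ W₀`
and `⟨n, D₁⟩ ∈ W₁` such that the selector `g` of `A` picks `a` from every pair `(a, b)` with
`a ∈ D₀`, `b ∈ D₁`; this condition is c.e. It is necessary, since for `D₀ ⊆ A` and `D₁ ⊆ Aᶜ` the
selector must pick the element of `A`. It is sufficient: if some `a ∈ D₀` lies outside `A`, then
no `b ∈ D₁` lies in `A`, for otherwise `g` would have to pick `b`; so `D₀ ⊆ A` or `D₁ ⊆ Aᶜ`.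
A cototal `A` is the case `C = A`.
-/

namespace RecursiveInOracle

theorem of_natPartrec {g : ℕ → ℕ} {f : ℕ →. ℕ} (h : Nat.Partrec f) : RecursiveInOracle g f := by
  induction h with
  | zero => exact zero
  | succ => exact succ
  | left => exact left
  | right => exact right
  | pair _ _ ih₁ ih₂ => exact pair ih₁ ih₂
  | comp _ _ ih₁ ih₂ => exact comp ih₁ ih₂
  | prec _ _ ih₁ ih₂ => exact prec ih₁ ih₂
  | rfind _ ih => exact rfind ih

theorem natPartrec_of_chi_empty {f : ℕ →. ℕ} (h : RecursiveInOracle (chi ∅) f) :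
    Nat.Partrec f := by
  induction h with
  | zero => exact .zero
  | succ => exact .succ
  | left => exact .left
  | right => exact .right
  | oracle => exact Nat.Partrec.zero.of_eq fun n => by simp [chi]; rfl
  | pair _ _ ih₁ ih₂ => exact .pair ih₁ ih₂
  | comp _ _ ih₁ ih₂ => exact .comp ih₁ ih₂
  | prec _ _ ih₁ ih₂ => exact .prec ih₁ ih₂
  | rfind _ ih => exact .rfind ih

theorem computable_of_chi_empty {f : ℕ → ℕ} (h : RecursiveInOracle (chi ∅) f) : Computable f :=
  Partrec.nat_iff.2 (natPartrec_of_chi_empty h)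

end RecursiveInOracle

theorem ceSet_iff_rePred {S : Set ℕ} : CESet S ↔ REPred (· ∈ S) := by
  constructor
  · rintro ⟨f, hf, rfl⟩
    exact (Partrec.nat_iff.2 hf.natPartrec_of_chi_empty).dom_re
  · intro hS
    refine ⟨_, .of_natPartrec (Partrec.nat_iff.1 (hS.map (Computable.const 0).to₂)), ?_⟩
    ext n
    simp [PFun.Dom, Part.assert]

theorem Primrec.nat_pow : Primrec₂ ((· ^ ·) : ℕ → ℕ → ℕ) :=
  Primrec₂.unpaired'.1 Nat.Primrec.pow

theorem Primrec.nat_testBit : Primrec₂ Nat.testBit := by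
  refine (Primrec.beq.comp (Primrec.nat_mod.comp (Primrec.nat_div.comp Primrec.fst
    (Primrec.nat_pow.comp (Primrec.const 2) Primrec.snd)) (Primrec.const 2))
    (Primrec.const 1)).to₂.of_eq fun u m => ?_
  rw [Nat.testBit_eq_decide_div_mod_eq, Bool.eq_iff_iff]
  simp

section Closure

variable {α β : Type*} [Primcodable α]

theorem ComputablePred.comp [Primcodable β] {p : β → Prop} {f : α → β}
    (hp : ComputablePred p) (hf : Computable f) : ComputablePred fun a => p (f a) := by
  obtain ⟨_, hp⟩ := hp
  exact ⟨fun a => inferInstance, hp.comp hf⟩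

theorem ComputablePred.imp {p q : α → Prop} (hp : ComputablePred p) (hq : ComputablePred q) :
    ComputablePred fun a => p a → q a := by
  obtain ⟨f, hf, rfl⟩ := ComputablePred.computable_iff.1 hp
  obtain ⟨g, hg, rfl⟩ := ComputablePred.computable_iff.1 hq
  refine ComputablePred.computable_iff.2
    ⟨fun a => !f a || g a, Primrec.or.to_comp.comp (Primrec.not.to_comp.comp hf) hg, ?_⟩
  funext a
  dsimp only
  cases f a <;> cases g a <;> simp

theorem ComputablePred.forall_lt {R : α → ℕ → Prop} {b : α → ℕ} (hb : Computable b)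
    (hR : ComputablePred fun x : α × ℕ => R x.1 x.2) :
    ComputablePred fun a => ∀ m < b a, R a m := by
  obtain ⟨f, hf, hfR⟩ := ComputablePred.computable_iff.1 hR
  refine ComputablePred.computable_iff.2
    ⟨fun a => Nat.rec true (fun m ih => ih && f (a, m)) (b a), ?_, ?_⟩
  · exact Computable.nat_rec hb (Computable.const true) (Primrec.and.to_comp.comp
      (Computable.snd.comp Computable.snd)
      (hf.comp (Computable.fst.pair (Computable.fst.comp Computable.snd)))).to₂
  · funext a
    dsimp only
    induction b a with
    | zero => simp
    | succ n ih =>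
      simp only [Nat.lt_succ_iff_lt_or_eq, or_imp, forall_and, forall_eq, Bool.and_eq_true, ← ih]
      rw [show R a n = (f (a, n) = true) from congrFun hfR (a, n)]

theorem REPred.comp [Primcodable β] {p : β → Prop} {f : α → β} (hp : REPred p)
    (hf : Computable f) : REPred fun a => p (f a) :=
  Partrec.comp hp hf

theorem REPred.and {p q : α → Prop} (hp : REPred p) (hq : REPred q) :
    REPred fun a => p a ∧ q a :=
  (hp.bind (hq.comp Computable.fst).to₂).of_eq fun a => Part.ext fun _ => by simp

theorem REPred.exists_of_computable₂ {q : α → ℕ → Bool} (hq : Computable₂ q) :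
    REPred fun a => ∃ n, q a n = true :=
  (Partrec.rfind hq.partrec₂).dom_re.of_eq fun a => by simp [Nat.rfind_dom]

open Nat.Partrec.Code in
/-- The witness search dovetails over pairs `(k, b)` of a step bound and a witness. -/
theorem REPred.exists [Denumerable β] {p : α → β → Prop}
    (hp : REPred fun x : α × β => p x.1 x.2) : REPred fun a => ∃ b, p a b := by
  obtain ⟨c, hc⟩ := exists_code.1 (Partrec.bind_decode₂_iff.1 hp)
  have hdom (x : α × β) : (eval c (Encodable.encode x)).Dom ↔ p x.1 x.2 := by
    simp [hc, Part.assert]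
  refine (REPred.exists_of_computable₂ (q := fun a m =>
    (evaln m.unpair.1 c (Encodable.encode (a, Denumerable.ofNat β m.unpair.2))).isSome) ?_).of_eq
    fun a => ⟨fun ⟨m, hm⟩ => ?_, fun ⟨b, hb⟩ => ?_⟩
  · exact (Primrec.option_isSome.comp (primrec_evaln.comp
      (((Primrec.fst.comp (Primrec.unpair.comp Primrec.snd)).pair (Primrec.const c)).pair
        (Primrec.encode.comp (Primrec.fst.pair
          ((Primrec.ofNat β).comp (Primrec.snd.comp (Primrec.unpair.comp Primrec.snd)))))))).to_comp
  · obtain ⟨y, hy⟩ := Option.isSome_iff_exists.1 hm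
    exact ⟨_, (hdom (a, _)).1 (Part.dom_iff_mem.2 ⟨y, evaln_sound hy⟩)⟩
  · obtain ⟨y, hy⟩ := Part.dom_iff_mem.1 ((hdom (a, b)).2 hb)
    obtain ⟨k, hk⟩ := evaln_complete.1 hy
    refine ⟨Nat.pair k (Encodable.encode b), ?_⟩
    simpa only [Nat.unpair_pair, Denumerable.ofNat_encode] using
      Option.isSome_iff_exists.2 ⟨y, hk⟩

end Closure

def IsSelector (A : Set ℕ) (g : ℕ → ℕ) : Prop :=
  ∀ x y : ℕ, (g (Nat.pair x y) = x ∨ g (Nat.pair x y) = y) ∧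
    ((x ∈ A ∨ y ∈ A) → g (Nat.pair x y) ∈ A)

def SelectsLeft (g : ℕ → ℕ) (u₀ u₁ : ℕ) : Prop :=
  ∀ a, u₀.testBit a = true → ∀ b, u₁.testBit b = true → g (Nat.pair a b) = a

theorem computablePred_selectsLeft {g : ℕ → ℕ} (hg : Computable g) :
    ComputablePred fun u : ℕ × ℕ => SelectsLeft g u.1 u.2 := by
  have hbit : ComputablePred fun x : ℕ × ℕ => x.1.testBit x.2 = true :=
    (Primrec.eq.comp Primrec.nat_testBit (Primrec.const true)).computablePred
  have hleft : ComputablePred fun x : ℕ × ℕ => g (Nat.pair x.1 x.2) = x.1 :=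
    (Primrec.eq.decide.to_comp.comp (hg.comp Primrec₂.natPair.to_comp)
      Computable.fst).computablePred
  have hinner : ComputablePred fun x : (ℕ × ℕ) × ℕ =>
      ∀ b < x.1.2, x.1.2.testBit b = true → g (Nat.pair x.2 b) = x.2 :=
    .forall_lt (Computable.snd.comp Computable.fst)
      ((hbit.comp ((Computable.snd.comp (Computable.fst.comp Computable.fst)).pair
        Computable.snd)).imp (hleft.comp ((Computable.snd.comp Computable.fst).pair
          Computable.snd)))
  refine (ComputablePred.forall_lt (R := fun u a => u.1.testBit a = true →
    ∀ b < u.2, u.2.testBit b = true → g (Nat.pair a b) = a) Computable.fst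
    ((hbit.comp ((Computable.fst.comp Computable.fst).pair Computable.snd)).imp hinner)).of_eq
    fun u => ?_
  have hlt {v m : ℕ} (h : v.testBit m = true) : m < v :=
    Nat.lt_two_pow_self.trans_le (Nat.ge_two_pow_of_testBit h)
  exact ⟨fun h a ha b hb => h a (hlt ha) ha b (hlt hb) hb, fun h a _ ha b _ hb => h a ha b hb⟩

namespace IsSelector

variable {A : Set ℕ} {g : ℕ → ℕ} {u₀ u₁ : ℕ}

theorem selectsLeft (hg : IsSelector A g) (h₀ : ∀ m, u₀.testBit m = true → m ∈ A)
    (h₁ : ∀ m, u₁.testBit m = true → m ∈ Aᶜ) : SelectsLeft g u₀ u₁ := fun a ha b hb =>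
  (hg a b).1.resolve_right fun h => h₁ b hb (h ▸ (hg a b).2 (.inl (h₀ a ha)))

theorem subset_or_subset_compl (hg : IsSelector A g) (h : SelectsLeft g u₀ u₁) :
    (∀ m, u₀.testBit m = true → m ∈ A) ∨ (∀ m, u₁.testBit m = true → m ∈ Aᶜ) :=
  or_iff_not_imp_left.2 fun h₀ b hb hbA =>
    h₀ fun a ha => h a ha b hb ▸ (hg a b).2 (.inr hbA)

end IsSelector

theorem SemiComputable.ceSet_of_enumRed {A C : Set ℕ} (hA : SemiComputable A)
    (h₀ : EnumRed C A) (h₁ : EnumRed C Aᶜ) : CESet C := by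
  obtain ⟨g, hgc, hg⟩ := hA
  obtain ⟨W₀, hW₀, hC₀⟩ := h₀
  obtain ⟨W₁, hW₁, hC₁⟩ := h₁
  have hC (n : ℕ) : n ∈ C ↔
      ∃ u : ℕ × ℕ, Nat.pair n u.1 ∈ W₀ ∧ Nat.pair n u.2 ∈ W₁ ∧ SelectsLeft g u.1 u.2 := by
    constructor
    · intro hn
      obtain ⟨u₀, hu₀, hD₀⟩ := (hC₀ n).1 hn
      obtain ⟨u₁, hu₁, hD₁⟩ := (hC₁ n).1 hn
      exact ⟨(u₀, u₁), hu₀, hu₁, IsSelector.selectsLeft hg hD₀ hD₁⟩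
    · rintro ⟨⟨u₀, u₁⟩, hu₀, hu₁, hsel⟩
      rcases IsSelector.subset_or_subset_compl hg hsel with hD₀ | hD₁
      · exact (hC₀ n).2 ⟨u₀, hu₀, hD₀⟩
      · exact (hC₁ n).2 ⟨u₁, hu₁, hD₁⟩
  have hpair {u : ℕ × ℕ → ℕ} (hu : Computable u) :
      Computable fun x : ℕ × (ℕ × ℕ) => Nat.pair x.1 (u x.2) :=
    Primrec₂.natPair.to_comp.comp Computable.fst (hu.comp Computable.snd)
  refine ceSet_iff_rePred.2 (REPred.of_eq (REPred.exists ?_) fun n => (hC n).symm)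
  exact ((ceSet_iff_rePred.1 hW₀).comp (hpair Computable.fst)).and
    (((ceSet_iff_rePred.1 hW₁).comp (hpair Computable.snd)).and
      ((computablePred_selectsLeft hgc.computable_of_chi_empty).to_re.comp Computable.snd))

theorem enumRed_refl (A : Set ℕ) : EnumRed A A := by
  refine ⟨{x | x.unpair.2 = 2 ^ x.unpair.1}, ceSet_iff_rePred.2 (PrimrecPred.computablePred
    (Primrec.eq.comp (Primrec.snd.comp Primrec.unpair)
      (Primrec.nat_pow.comp (Primrec.const 2) (Primrec.fst.comp Primrec.unpair)))).to_re,
    fun n => ⟨fun hn => ⟨2 ^ n, by simp, fun m hm => ?_⟩, fun ⟨u, hu, hD⟩ => hD n ?_⟩⟩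
  · rw [Nat.testBit_two_pow, decide_eq_true_iff] at hm
    rwa [← hm]
  · simp_all

/-- A semi-computable set forms a minimal pair with its complement in the
enumeration degrees, and is c.e. if it is cototal. -/
theorem stmt11 (A : Set ℕ) (hA : SemiComputable A) :
    (∀ C : Set ℕ, EnumRed C A → EnumRed C Aᶜ → CESet C) ∧ (Cototal A → CESet A) :=
  ⟨fun _ => hA.ceSet_of_enumRed, hA.ceSet_of_enumRed (enumRed_refl A)⟩
end
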